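/- arXiv:2208.11869 — 2 statements merged into one kernel-verified Lean document; each statement's English description precedes it below -/
import Mathlib

section
/- The initial cycles are stable under the projection operators: (a) P^{32}C₁ ⊆ C₁ and P^{32}C₂ ⊆ C₂; (b) P^{12}C₂ ⊆ C₂ and P^{12}C₃ ⊆ C₃. -/
namespace GenPotts

/-- Spin values: `0` represents spin `1`, `1` represents spin `2`, `2` represents spin `3`. -/
abbrev Spin := Fin 3

/-- Vertices of the two-dimensional discrete torus. -/
abbrev Vtx (K L : ℕ) := ZMod K × ZMod L

/-- Spin configurations. -/
abbrev Config (K L : ℕ) := Vtx K L → Spin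

section Defs

variable (K L : ℕ)

/-- The constant configuration with all spins equal to `r`. -/
def const (r : Spin) : Config K L := fun _ => r

variable [NeZero K] [NeZero L]

/-- The number of (unordered nearest-neighbour) edges of the torus whose endpoint spins are
`i` and `j`.  Each edge is represented exactly once as a pair (vertex, direction), where the
direction `true` points right and `false` points up. -/
def nEdge (σ : Config K L) (i j : Spin) : ℕ :=
  ((Finset.univ : Finset (Vtx K L × Bool)).filter (fun p =>
    (σ p.1 = i ∧ σ (if p.2 then (p.1.1 + 1, p.1.2) else (p.1.1, p.1.2 + 1)) = j) ∨
    (σ p.1 = j ∧ σ (if p.2 then (p.1.1 + 1, p.1.2) else (p.1.1, p.1.2 + 1)) = i))).card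

/-- The number of vertices with spin `i`. -/
def nVtx (σ : Config K L) (i : Spin) : ℕ :=
  ((Finset.univ : Finset (Vtx K L)).filter (fun v => σ v = i)).card

end Defs

/-- The coupling constants of the generalized Potts model. -/
structure Couplings where
  J11 : ℝ
  J22 : ℝ
  J33 : ℝ
  J12 : ℝ
  J13 : ℝ
  J23 : ℝ

namespace Couplings

def γ1 (C : Couplings) : ℝ := C.J11 - C.J22
def γ12 (C : Couplings) : ℝ := C.J12 + C.J22
def γ23 (C : Couplings) : ℝ := C.J23 + C.J22

end Couplings

/-- The Hamiltonian of the generalized three-state Potts model. -/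
noncomputable def H (K L : ℕ) [NeZero K] [NeZero L] (C : Couplings) (σ : Config K L) : ℝ :=
  -(C.J11 * nEdge K L σ 0 0 + C.J22 * nEdge K L σ 1 1 + C.J33 * nEdge K L σ 2 2)
    + C.J12 * nEdge K L σ 0 1 + C.J13 * nEdge K L σ 0 2 + C.J23 * nEdge K L σ 1 2

/-- The auxiliary function `f_h`. -/
noncomputable def fh (h x : ℝ) : ℝ :=
  4 * (x + h / 2) * (⌈(x + h / 2) / h⌉ : ℝ)
    - 2 * h * ((⌈(x + h / 2) / h⌉ : ℝ) ^ 2 - (⌈(x + h / 2) / h⌉ : ℝ) + 1)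

/-- The critical length `ℓ*`. -/
noncomputable def lstar (C : Couplings) : ℕ := ⌈(2 * C.γ12 + C.γ1) / (2 * C.γ1)⌉₊

/-- The critical energy barrier `Γ*`. -/
noncomputable def Γstar (C : Couplings) : ℝ := fh C.γ1 C.γ12

/-- The standing assumptions on the lattice sizes and the coupling constants. -/
structure Admissible (K L : ℕ) (C : Couplings) : Prop where
  hKL : K ≤ L
  hK : 2 * lstar C ^ 2 ≤ K
  pos11 : 0 < C.J11
  pos22 : 0 < C.J22
  pos33 : 0 < C.J33
  pos12 : 0 < C.J12
  pos13 : 0 < C.J13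
  pos23 : 0 < C.J23
  h1122 : C.J22 < C.J11
  h2233 : C.J22 = C.J33
  h1213 : C.J12 = C.J13
  hA : ∀ n : ℤ, (2 * C.γ12 + C.γ1) / (2 * C.γ1) ≠ (n : ℝ)
  hB : fh C.γ1 C.γ12 = 2 * (K + 1) * C.γ23
  hC : 4 * C.γ23 + C.γ1 ≤ 2 * C.γ12

section Paths

variable (K L : ℕ) [NeZero K] [NeZero L]

/-- Two configurations differ at exactly one vertex. -/
def SingleFlip (σ σ' : Config K L) : Prop :=
  ∃ v, σ v ≠ σ' v ∧ ∀ w, w ≠ v → σ w = σ' w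

/-- A path: a finite sequence of configurations in which consecutive configurations differ
at exactly one vertex. -/
structure Path where
  len : ℕ
  toFun : ℕ → Config K L
  step : ∀ n, n < len → SingleFlip K L (toFun n) (toFun (n + 1))

/-- The height of a path: the maximum of `H` along it. -/
noncomputable def Path.height {K L : ℕ} [NeZero K] [NeZero L] (ω : Path K L)
    (C : Couplings) : ℝ :=
  Finset.sup' (Finset.range (ω.len + 1))
    (Finset.nonempty_range_iff.mpr (Nat.succ_ne_zero _))
    (fun n => H K L C (ω.toFun n))

/-- The path goes from `σ` to `σ'`. -/
def Path.FromTo {K L : ℕ} [NeZero K] [NeZero L] (ω : Path K L)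
    (σ σ' : Config K L) : Prop :=
  ω.toFun 0 = σ ∧ ω.toFun ω.len = σ'

/-- A path is an `ij`-path if every configuration along it has all spins in `{i, j}`. -/
def Path.OnlySpins {K L : ℕ} [NeZero K] [NeZero L] (ω : Path K L) (i j : Spin) : Prop :=
  ∀ n ≤ ω.len, ∀ v, ω.toFun n v = i ∨ ω.toFun n v = j

/-- The communication height `Φ(σ, σ')`: the minimal height over paths from `σ` to `σ'`. -/
noncomputable def Phi (C : Couplings) (σ σ' : Config K L) : ℝ :=
  sInf {x | ∃ ω : Path K L, ω.FromTo σ σ' ∧ ω.height C = x}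

/-- The communication height `Φ(σ, A)` between `σ` and a set `A`. -/
noncomputable def PhiSet (C : Couplings) (σ : Config K L) (A : Set (Config K L)) : ℝ :=
  sInf {x | ∃ ω : Path K L, ω.toFun 0 = σ ∧ ω.toFun ω.len ∈ A ∧ ω.height C = x}

/-- The energy barrier `Γ(σ, σ') = Φ(σ, σ') − H(σ)`. -/
noncomputable def Gamma (C : Couplings) (σ σ' : Config K L) : ℝ :=
  Phi K L C σ σ' - H K L C σ

/-- The stability level `V_σ = Φ(σ, I_σ) − H(σ)` where `I_σ = {η : H(η) < H(σ)}`. -/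
noncomputable def stabLevel (C : Couplings) (σ : Config K L) : ℝ :=
  PhiSet K L C σ {η | H K L C η < H K L C σ} - H K L C σ

/-- The set `X^s` of global minimizers of `H`. -/
def Xs (C : Couplings) : Set (Config K L) :=
  {σ | ∀ η, H K L C σ ≤ H K L C η}

/-- The set `X^m` of metastable configurations. -/
noncomputable def Xm (C : Couplings) : Set (Config K L) :=
  {η | η ∉ Xs K L C ∧
    stabLevel K L C η = sSup {x | ∃ σ, σ ∉ Xs K L C ∧ stabLevel K L C σ = x}}

/-- The projection operator `P^{rs}` replacing every spin `r` by `s`. -/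
def proj (r s : Spin) (σ : Config K L) : Config K L :=
  fun v => if σ v = r then s else σ v

/-- The initial cycle `C_r = {σ : Φ(𝐫, σ) < H(𝟐) + Γ*}`. -/
noncomputable def initCycle (C : Couplings) (r : Spin) : Set (Config K L) :=
  {σ | Phi K L C (const K L r) σ < H K L C (const K L 1) + Γstar C}

/-- An optimal path from `σ` to `σ'`: a path whose height equals `Φ(σ, σ')`. -/
noncomputable def OptPath (C : Couplings) (σ σ' : Config K L) (ω : Path K L) : Prop :=
  ω.FromTo σ σ' ∧ ω.height C = Phi K L C σ σ'

/-- The configurations at which `H` attains its maximum along a path. -/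
noncomputable def pathArgmax (C : Couplings) (ω : Path K L) : Set (Config K L) :=
  {ξ | (∃ n ≤ ω.len, ω.toFun n = ξ) ∧ H K L C ξ = ω.height C}

/-- The set of minimal saddles `S(σ, σ')`. -/
noncomputable def Saddles (C : Couplings) (σ σ' : Config K L) : Set (Config K L) :=
  {ξ | ∃ ω : Path K L, OptPath K L C σ σ' ω ∧ ξ ∈ pathArgmax K L C ω}

/-- `W` is a gate for the transition `σ → σ'`. -/
noncomputable def IsGate (C : Couplings) (σ σ' : Config K L) (W : Set (Config K L)) : Prop :=
  W ⊆ Saddles K L C σ σ' ∧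
    ∀ ω : Path K L, OptPath K L C σ σ' ω → ∃ n ≤ ω.len, ω.toFun n ∈ W

/-- `W` is a minimal gate for the transition `σ → σ'`. -/
noncomputable def IsMinimalGate (C : Couplings) (σ σ' : Config K L)
    (W : Set (Config K L)) : Prop :=
  IsGate K L C σ σ' W ∧
    ∀ W', W' ⊂ W → ∃ ω : Path K L, OptPath K L C σ σ' ω ∧ ∀ n ≤ ω.len, ω.toFun n ∉ W'

/-- `G(σ, σ')`: the union of all minimal gates for the transition `σ → σ'`. -/
noncomputable def gateUnion (C : Couplings) (σ σ' : Config K L) : Set (Config K L) :=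
  {ξ | ∃ W, IsMinimalGate K L C σ σ' W ∧ ξ ∈ W}

end Paths

section Geometry

variable (K L : ℕ)

/-- The `a × b` rectangle (`a` columns, `b` rows) with lower-left corner `(x0, y0)`. -/
def rectSet (x0 : ZMod K) (y0 : ZMod L) (a b : ℕ) : Set (Vtx K L) :=
  {v | ∃ i j : ℕ, i < a ∧ j < b ∧ v = (x0 + (i : ZMod K), y0 + (j : ZMod L))}

/-- A vertical bar of `l` consecutive cells in column `x` starting at row `y0`. -/
def barV (x : ZMod K) (y0 : ZMod L) (l : ℕ) : Set (Vtx K L) :=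
  {v | ∃ j : ℕ, j < l ∧ v = (x, y0 + (j : ZMod L))}

/-- A horizontal bar of `l` consecutive cells in row `y` starting at column `x0`. -/
def barH (x0 : ZMod K) (y : ZMod L) (l : ℕ) : Set (Vtx K L) :=
  {v | ∃ i : ℕ, i < l ∧ v = (x0 + (i : ZMod K), y)}

/-- The configuration with spin `s` exactly on the set `A` and spin `r` elsewhere. -/
noncomputable def onSet (A : Set (Vtx K L)) (r s : Spin) : Config K L :=
  fun v => @ite _ (v ∈ A) (Classical.dec _) s r

/-- `R_{a,b}(r,s)`: configurations equal to `r` everywhere except for spins `s` on an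
`a × b` rectangle. -/
noncomputable def Rconf (a b : ℕ) (r s : Spin) : Set (Config K L) :=
  {σ | ∃ x0 y0, σ = onSet K L (rectSet K L x0 y0 a b) r s}

/-- `B^l_{a,b}(r,s)`: configurations equal to `r` everywhere except for spins `s` on an
`a × b` rectangle together with a bar of `l` consecutive cells attached to one of the
(vertical) sides of length `b`. -/
noncomputable def Bconf (a b l : ℕ) (r s : Spin) : Set (Config K L) :=
  {σ | ∃ (x0 : ZMod K) (y0 : ZMod L) (x : ZMod K) (j0 : ℕ),
      (x = x0 - 1 ∨ x = x0 + (a : ZMod K)) ∧ j0 + l ≤ b ∧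
      σ = onSet K L (rectSet K L x0 y0 a b ∪ barV K L x (y0 + (j0 : ZMod L)) l) r s}

/-- `B̂^l_{a,b}(r,s)`: as `B^l_{a,b}(r,s)` but with the bar attached to one of the
(horizontal) sides of length `a`. -/
noncomputable def Bhat (a b l : ℕ) (r s : Spin) : Set (Config K L) :=
  {σ | ∃ (x0 : ZMod K) (y0 : ZMod L) (y : ZMod L) (i0 : ℕ),
      (y = y0 - 1 ∨ y = y0 + (b : ZMod L)) ∧ i0 + l ≤ a ∧
      σ = onSet K L (rectSet K L x0 y0 a b ∪ barH K L (x0 + (i0 : ZMod K)) y l) r s}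

/-- The critical set `W(𝐦, 𝟏) = B^1_{ℓ*−1,ℓ*}(m,1) ∪ B̂^1_{ℓ*,ℓ*−1}(m,1)`. -/
noncomputable def Wcrit (C : Couplings) (m : Spin) : Set (Config K L) :=
  Bconf K L (lstar C - 1) (lstar C) 1 m 0 ∪ Bhat K L (lstar C) (lstar C - 1) 1 m 0

/-- The set `W'(𝐦, 𝟏) = B̂^1_{ℓ*−1,ℓ*}(m,1) ∪ B^1_{ℓ*,ℓ*−1}(m,1)`. -/
noncomputable def Wcrit' (C : Couplings) (m : Spin) : Set (Config K L) :=
  Bhat K L (lstar C - 1) (lstar C) 1 m 0 ∪ Bconf K L (lstar C) (lstar C - 1) 1 m 0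

/-- The set `𝒫(𝐫, 𝐬)`. -/
noncomputable def Pgate (r s : Spin) : Set (Config K L) :=
  Bconf K L 1 K (K - 1) r s ∪ (if K = L then Bhat K L K 1 (K - 1) r s else ∅)

/-- The set `𝒬(𝐫, 𝐬)`. -/
noncomputable def Qgate (r s : Spin) : Set (Config K L) :=
  Rconf K L 2 (K - 1) r s ∪ Bconf K L 1 K (K - 2) r s ∪
    (if K = L then Rconf K L (K - 1) 2 r s ∪ Bhat K L K 1 (K - 2) r s else ∅)

/-- The set `ℋ_i(𝐫, 𝐬)`. -/
noncomputable def Hgate (i : ℕ) (r s : Spin) : Set (Config K L) :=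
  Bconf K L 1 K i r s ∪ (⋃ j ∈ Finset.Icc (i + 1) (K - 2), Bconf K L 1 (K - 1) j r s) ∪
    (if K = L then
      Bhat K L K 1 i r s ∪ ⋃ j ∈ Finset.Icc (i + 1) (K - 2), Bhat K L (K - 1) 1 j r s
    else ∅)

/-- The set `𝒲^h_j(𝐫, 𝐬)`. -/
noncomputable def Wgate (j h : ℕ) (r s : Spin) : Set (Config K L) :=
  Bconf K L j K h r s ∪ (if K = L then Bhat K L K j h r s else ∅)

/-- The admissible gate collection for the transition between `𝟐` and `𝟑`. -/
noncomputable def gateCollection : Set (Set (Config K L)) :=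
  {A | (∃ j h, 2 ≤ j ∧ j ≤ L - 3 ∧ 1 ≤ h ∧ h ≤ K - 1 ∧ A = Wgate K L j h 1 2)
    ∨ A = Qgate K L 1 2 ∨ A = Pgate K L 1 2 ∨ A = Pgate K L 2 1 ∨ A = Qgate K L 2 1
    ∨ (∃ i, 1 ≤ i ∧ i ≤ K - 3 ∧ A = Hgate K L i 1 2)
    ∨ (∃ i, 1 ≤ i ∧ i ≤ K - 3 ∧ A = Hgate K L i 2 1)}

/-- The union `𝒲(𝟐, 𝟑)` of all the plateau gates between `𝟐` and `𝟑`. -/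
noncomputable def W23 : Set (Config K L) :=
  (⋃ i ∈ Finset.Icc 1 (K - 3), Hgate K L i 1 2) ∪ Qgate K L 1 2 ∪ Pgate K L 1 2 ∪
    (⋃ j ∈ Finset.Icc 2 (L - 3), ⋃ h ∈ Finset.Icc 1 (K - 1), Wgate K L j h 1 2) ∪
    Pgate K L 2 1 ∪ Qgate K L 2 1 ∪ (⋃ i ∈ Finset.Icc 1 (K - 3), Hgate K L i 2 1)

/-- Nearest-neighbour adjacency on the torus. -/
def Adj (v w : Vtx K L) : Prop :=
  w = (v.1 + 1, v.2) ∨ w = (v.1 - 1, v.2) ∨ w = (v.1, v.2 + 1) ∨ w = (v.1, v.2 - 1)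

/-- An `r`-cluster of `σ`: a maximal connected set of vertices all having spin `r`. -/
def IsCluster (σ : Config K L) (r : Spin) (A : Set (Vtx K L)) : Prop :=
  A.Nonempty ∧ (∀ v ∈ A, σ v = r) ∧
    (∀ v ∈ A, ∀ w ∈ A,
      Relation.ReflTransGen (fun a b => a ∈ A ∧ b ∈ A ∧ Adj K L a b) v w) ∧
    (∀ v ∈ A, ∀ w, Adj K L v w → σ w = r → w ∈ A)

/-- A set of vertices is a rectangle: the product of a set of consecutive columns and a set
of consecutive rows of the torus. -/
def IsRectangle (A : Set (Vtx K L)) : Prop :=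
  ∃ (x0 : ZMod K) (y0 : ZMod L) (a b : ℕ), a ≤ K ∧ b ≤ L ∧ A = rectSet K L x0 y0 a b

end Geometry

section LocalMin

variable (K L : ℕ) [NeZero K] [NeZero L]

/-- The set `M` of strict local minima of `H`. -/
noncomputable def Mset (C : Couplings) : Set (Config K L) :=
  {σ | ∀ σ', SingleFlip K L σ σ' → H K L C σ < H K L C σ'}

/-- A stable plateau: a nonempty set of configurations of constant energy, connected under
single spin flips, such that every configuration outside it reachable by a single spin flip
has strictly larger energy. -/
noncomputable def IsStablePlateau (C : Couplings) (D : Set (Config K L)) : Prop :=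
  D.Nonempty ∧ (∃ c, ∀ σ ∈ D, H K L C σ = c) ∧
    (∀ σ ∈ D, ∀ η ∈ D,
      Relation.ReflTransGen (fun a b => a ∈ D ∧ b ∈ D ∧ SingleFlip K L a b) σ η) ∧
    (∀ σ ∈ D, ∀ σ', SingleFlip K L σ σ' → σ' ∉ D → H K L C σ < H K L C σ')

/-- The union `M̄` of all stable plateaux. -/
noncomputable def Mbar (C : Couplings) : Set (Config K L) :=
  {σ | ∃ D, IsStablePlateau K L C D ∧ σ ∈ D}

end LocalMin

/-!
A single-site map sends a path to a path once repeated configurations are deleted, so it suffices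
that along every path from `𝐫` of height below `H(𝟐) + Γ*` the projected configurations stay below
that level.

For `P^{32}` every edge energy weakly decreases, because `J₂₂ = J₃₃`, `J₁₂ = J₁₃` and `J₂₃ > -J₂₂`.
For `P^{12}`, writing `A` for the set of spins `1`, the energy drops by at least
`(γ₁/2 + γ₁₂ - γ₂₃)|∂A| - 2γ₁|A|`, and the isoperimetric inequality on the torus makes this
non-negative as long as `|A| ≤ ℓ*(ℓ*-1)`. A path from `𝟐` or `𝟑` cannot exceed this area: `|A|`
changes by at most one per step, and by the same isoperimetric inequality every configuration with
`|A| = ℓ*(ℓ*-1)+1` has energy at least `H(𝟐) + Γ*`.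
-/

section PathConstruction

variable {K L : ℕ} [NeZero K] [NeZero L]

def Path.refl (σ : Config K L) : Path K L :=
  ⟨0, fun _ => σ, fun _ hn => absurd hn (Nat.not_lt_zero _)⟩

def Path.snoc (ω : Path K L) (τ : Config K L) (h : SingleFlip K L (ω.toFun ω.len) τ) :
    Path K L where
  len := ω.len + 1
  toFun n := if n ≤ ω.len then ω.toFun n else τ
  step n hn := by
    rcases Nat.lt_or_eq_of_le (Nat.lt_succ_iff.mp hn) with hn | rfl
    · simpa [hn.le, Nat.succ_le_of_lt hn] using ω.step n hn
    · simpa using h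

lemma exists_path_of_chain (F : ℕ → Config K L) (len : ℕ)
    (hF : ∀ n < len, F n = F (n + 1) ∨ SingleFlip K L (F n) (F (n + 1))) :
    ∃ ω : Path K L, ω.FromTo (F 0) (F len) ∧ ∀ n ≤ ω.len, ∃ m ≤ len, ω.toFun n = F m := by
  induction len with
  | zero => exact ⟨Path.refl (F 0), ⟨rfl, rfl⟩, fun _ _ => ⟨0, le_rfl, rfl⟩⟩
  | succ len ih =>
    obtain ⟨ω, ⟨h0, hlen⟩, hmem⟩ := ih fun n hn => hF n (by omega)
    rcases hF len (by omega) with heq | hflip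
    · exact ⟨ω, ⟨h0, hlen.trans heq⟩, fun n hn =>
        (hmem n hn).imp fun m hm => ⟨by omega, hm.2⟩⟩
    · refine ⟨ω.snoc (F (len + 1)) (hlen ▸ hflip), ⟨?_, ?_⟩, fun n hn => ?_⟩
      · simpa [Path.snoc] using h0
      · simp [Path.snoc]
      · by_cases hn' : n ≤ ω.len
        · obtain ⟨m, hm, hωm⟩ := hmem n hn'
          exact ⟨m, by omega, by simpa [Path.snoc, hn'] using hωm⟩
        · exact ⟨len + 1, le_rfl, by simp [Path.snoc, hn']⟩

lemma exists_path (σ σ' : Config K L) : ∃ ω : Path K L, ω.FromTo σ σ' := by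
  let e := Fintype.equivFin (Vtx K L)
  let F : ℕ → Config K L := fun k v => if (e v : ℕ) < k then σ' v else σ v
  have hF : ∀ n < Fintype.card (Vtx K L),
      F n = F (n + 1) ∨ SingleFlip K L (F n) (F (n + 1)) := by
    intro n hn
    have hoff : ∀ w, w ≠ e.symm ⟨n, hn⟩ → F n w = F (n + 1) w := by
      intro w hw
      have : (e w : ℕ) ≠ n := fun h => hw (e.eq_symm_apply.mpr (Fin.ext h))
      have hlt : (e w : ℕ) < n ↔ (e w : ℕ) < n + 1 := by omega
      simp only [F, hlt]
    by_cases hv : F n (e.symm ⟨n, hn⟩) = F (n + 1) (e.symm ⟨n, hn⟩)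
    · left
      funext w
      by_cases hw : w = e.symm ⟨n, hn⟩
      · rw [hw, hv]
      · exact hoff w hw
    · exact Or.inr ⟨_, hv, hoff⟩
  obtain ⟨ω, ⟨h0, h1⟩, -⟩ := exists_path_of_chain F _ hF
  refine ⟨ω, h0.trans (funext fun v => ?_), h1.trans (funext fun v => ?_)⟩
  · simp [F]
  · exact if_pos (e v).isLt

lemma Path.le_height (C : Couplings) (ω : Path K L) {n : ℕ} (hn : n ≤ ω.len) :
    H K L C (ω.toFun n) ≤ ω.height C :=
  Finset.le_sup' (fun m => H K L C (ω.toFun m)) (Finset.mem_range.mpr (Nat.lt_succ_of_le hn))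

lemma Path.height_lt_iff (C : Couplings) (ω : Path K L) (c : ℝ) :
    ω.height C < c ↔ ∀ n ≤ ω.len, H K L C (ω.toFun n) < c := by
  simp [Path.height, Finset.sup'_lt_iff]

lemma Phi_le_height (C : Couplings) {σ σ' : Config K L} {ω : Path K L} (h : ω.FromTo σ σ') :
    Phi K L C σ σ' ≤ ω.height C := by
  refine csInf_le ⟨H K L C σ, ?_⟩ ⟨ω, h, rfl⟩
  rintro _ ⟨ω', ⟨h0, -⟩, rfl⟩
  simpa [h0] using ω'.le_height C (Nat.zero_le _)

lemma exists_path_height_lt_of_Phi_lt (C : Couplings) {σ σ' : Config K L} {c : ℝ}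
    (h : Phi K L C σ σ' < c) : ∃ ω : Path K L, ω.FromTo σ σ' ∧ ω.height C < c := by
  obtain ⟨ω, hω⟩ := exists_path σ σ'
  obtain ⟨_, ⟨ω, hω, rfl⟩, hlt⟩ :=
    exists_lt_of_csInf_lt (s := {x | ∃ ω : Path K L, ω.FromTo σ σ' ∧ ω.height C = x})
      ⟨_, ω, hω, rfl⟩ h
  exact ⟨ω, hω, hlt⟩

end PathConstruction

section Projection

variable {K L : ℕ}

lemma proj_const_of_ne {a r : Spin} (h : r ≠ a) (b : Spin) :
    proj K L a b (const K L r) = const K L r :=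
  funext fun _ => if_neg h

lemma SingleFlip.proj_eq_or_singleFlip {σ σ' : Config K L} (h : SingleFlip K L σ σ')
    (a b : Spin) :
    proj K L a b σ = proj K L a b σ' ∨ SingleFlip K L (proj K L a b σ) (proj K L a b σ') := by
  obtain ⟨v, -, hoff⟩ := h
  have hoff' : ∀ w, w ≠ v → proj K L a b σ w = proj K L a b σ' w := fun w hw => by
    simp only [proj, hoff w hw]
  by_cases hv : proj K L a b σ v = proj K L a b σ' v
  · left
    funext w
    by_cases hw : w = v
    · rw [hw, hv]
    · exact hoff' w hw
  · exact Or.inr ⟨v, hv, hoff'⟩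

variable [NeZero K] [NeZero L]

lemma proj_image_subset_of_forall_path (C : Couplings) {r a : Spin} (hr : r ≠ a) (b : Spin)
    {c : ℝ} (hsafe : ∀ ω : Path K L, ω.toFun 0 = const K L r → ω.height C < c →
      ∀ n ≤ ω.len, H K L C (proj K L a b (ω.toFun n)) < c) :
    proj K L a b '' {σ | Phi K L C (const K L r) σ < c} ⊆
      {σ | Phi K L C (const K L r) σ < c} := by
  rintro _ ⟨σ, hσ, rfl⟩
  obtain ⟨ω, ⟨h0, hlen⟩, hω⟩ := exists_path_height_lt_of_Phi_lt C hσ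
  obtain ⟨ω', ⟨h0', hlen'⟩, hmem⟩ :=
    exists_path_of_chain (fun n => proj K L a b (ω.toFun n)) ω.len
      fun n hn => (ω.step n hn).proj_eq_or_singleFlip a b
  have hft : ω'.FromTo (const K L r) (proj K L a b σ) :=
    ⟨by rw [h0', h0, proj_const_of_ne hr], by rw [hlen', hlen]⟩
  refine (Phi_le_height C hft).trans_lt ((ω'.height_lt_iff C c).mpr fun n hn => ?_)
  obtain ⟨m, hm, hωm⟩ := hmem n hn
  exact hωm ▸ hsafe ω h0 hω m hm

end Projection

section Energy

open Finset

variable {K L : ℕ}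

def edgeEnd (p : Vtx K L × Bool) : Vtx K L :=
  if p.2 then (p.1.1 + 1, p.1.2) else (p.1.1, p.1.2 + 1)

def pairEnergy (C : Couplings) : Spin → Spin → ℝ :=
  ![![-C.J11, C.J12, C.J13], ![C.J12, -C.J22, C.J23], ![C.J13, C.J23, -C.J33]]

variable [NeZero K] [NeZero L]

def boundarySlots (S : Finset (Vtx K L)) : Finset (Vtx K L × Bool) :=
  {p | ¬(p.1 ∈ S ↔ edgeEnd p ∈ S)}

lemma H_eq_sum_pairEnergy (C : Couplings) (σ : Config K L) :
    H K L C σ = ∑ p : Vtx K L × Bool, pairEnergy C (σ p.1) (σ (edgeEnd p)) := by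
  simp only [H, nEdge, edgeEnd, card_filter, Nat.cast_sum, Nat.cast_ite, Nat.cast_one,
    Nat.cast_zero, mul_sum, ← sum_add_distrib, ← sum_neg_distrib]
  refine sum_congr rfl fun p _ => ?_
  generalize σ p.1 = a
  generalize σ (if p.2 then (p.1.1 + 1, p.1.2) else (p.1.1, p.1.2 + 1)) = b
  fin_cases a <;> fin_cases b <;> simp [pairEnergy]

lemma sum_slots_add_edgeEnd (g : Vtx K L → ℝ) :
    ∑ p : Vtx K L × Bool, (g p.1 + g (edgeEnd p)) = 4 * ∑ v, g v := by
  have hx : ∑ v : Vtx K L, g (v.1 + 1, v.2) = ∑ v, g v :=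
    Fintype.sum_equiv ((Equiv.addRight 1).prodCongr (Equiv.refl _)) _ _ fun _ => rfl
  have hy : ∑ v : Vtx K L, g (v.1, v.2 + 1) = ∑ v, g v :=
    Fintype.sum_equiv ((Equiv.refl _).prodCongr (Equiv.addRight 1)) _ _ fun _ => rfl
  rw [Fintype.sum_prod_type]
  simp only [Fintype.sum_bool, edgeEnd, if_true, Bool.false_eq_true, if_false, sum_add_distrib,
    hx, hy]
  ring

lemma sum_slots_affine (σ : Config K L) (c α β : ℝ) :
    ∑ p : Vtx K L × Bool, (c + α * ((if σ p.1 = 0 then 1 else 0) +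
        (if σ (edgeEnd p) = 0 then 1 else 0)) +
      β * (if ¬(σ p.1 = 0 ↔ σ (edgeEnd p) = 0) then 1 else 0)) =
      2 * K * L * c + 4 * α * nVtx K L σ 0 + β * #(boundarySlots {v | σ v = 0}) := by
  rw [sum_add_distrib, sum_add_distrib, ← mul_sum, ← mul_sum,
    sum_slots_add_edgeEnd (fun v => if σ v = 0 then 1 else 0), sum_boole, sum_boole, sum_const,
    card_univ]
  simp only [Fintype.card_prod, ZMod.card, Fintype.card_bool, nsmul_eq_mul, Nat.cast_mul,
    Nat.cast_ofNat, nVtx, boundarySlots, mem_filter, mem_univ, true_and]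
  ring

end Energy

section EnergyEstimates

open Finset

variable {K L : ℕ} [NeZero K] [NeZero L] {C : Couplings}

lemma H_const_one : H K L C (const K L 1) = -(K * L * 2 * C.J22) := by
  simp [H_eq_sum_pairEnergy, const, pairEnergy]

lemma H_proj21_le (h2233 : C.J22 = C.J33) (h1213 : C.J12 = C.J13) (h23 : 0 ≤ C.γ23)
    (σ : Config K L) : H K L C (proj K L 2 1 σ) ≤ H K L C σ := by
  have edge_le : ∀ a b : Spin,
      pairEnergy C (if a = 2 then 1 else a) (if b = 2 then 1 else b) ≤ pairEnergy C a b := by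
    unfold Couplings.γ23 at h23
    intro a b
    fin_cases a <;> fin_cases b <;> simp [pairEnergy] <;> linarith
  rw [H_eq_sum_pairEnergy, H_eq_sum_pairEnergy]
  exact sum_le_sum fun p _ => edge_le _ _

lemma H_const_one_sub_add_le (h2233 : C.J22 = C.J33) (h1213 : C.J12 = C.J13) (h23 : 0 ≤ C.γ23)
    (σ : Config K L) :
    H K L C (const K L 1) - 2 * C.γ1 * nVtx K L σ 0 +
      (C.γ1 / 2 + C.γ12) * #(boundarySlots {v | σ v = 0}) ≤ H K L C σ := by
  have edge_le : ∀ a b : Spin, -C.J22 + -(C.γ1 / 2) * ((if a = 0 then 1 else 0) +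
        (if b = 0 then 1 else 0)) + (C.γ1 / 2 + C.γ12) * (if ¬(a = 0 ↔ b = 0) then 1 else 0) ≤
      pairEnergy C a b := by
    unfold Couplings.γ1 Couplings.γ12 Couplings.γ23 at *
    intro a b
    fin_cases a <;> fin_cases b <;> simp [pairEnergy] <;> linarith
  rw [H_const_one, H_eq_sum_pairEnergy C σ]
  refine le_of_eq_of_le ?_ (sum_le_sum fun p _ => edge_le (σ p.1) (σ (edgeEnd p)))
  rw [sum_slots_affine]
  ring

lemma H_sub_H_proj01_ge (h1213 : C.J12 = C.J13) (h23 : 0 ≤ C.γ23)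
    (σ : Config K L) :
    -(2 * C.γ1 * nVtx K L σ 0) + (C.γ1 / 2 + C.γ12 - C.γ23) * #(boundarySlots {v | σ v = 0}) ≤
      H K L C σ - H K L C (proj K L 0 1 σ) := by
  have edge_le : ∀ a b : Spin, 0 + -(C.γ1 / 2) * ((if a = 0 then 1 else 0) +
        (if b = 0 then 1 else 0)) +
        (C.γ1 / 2 + C.γ12 - C.γ23) * (if ¬(a = 0 ↔ b = 0) then 1 else 0) ≤
      pairEnergy C a b - pairEnergy C (if a = 0 then 1 else a) (if b = 0 then 1 else b) := by
    unfold Couplings.γ1 Couplings.γ12 Couplings.γ23 at *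
    intro a b
    fin_cases a <;> fin_cases b <;> simp [pairEnergy] <;> linarith
  rw [H_eq_sum_pairEnergy C σ, H_eq_sum_pairEnergy, ← sum_sub_distrib]
  refine le_of_eq_of_le ?_ (sum_le_sum fun p _ => edge_le (σ p.1) (σ (edgeEnd p)))
  rw [sum_slots_affine]
  ring

end EnergyEstimates

section Isoperimetry

open Finset

lemma ZMod.exists_and_not_add_one {n : ℕ} [NeZero n] {P : ZMod n → Prop} {a b : ZMod n}
    (ha : P a) (hb : ¬P b) : ∃ y, P y ∧ ¬P (y + 1) := by
  by_contra! h
  have hall : ∀ k : ℕ, P (a + k) := fun k => by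
    induction k with
    | zero => simpa using ha
    | succ k ih => simpa [add_assoc] using h _ ih
  exact hb (by simpa using hall (b - a).val)

lemma ZMod.two_le_card_filter_not_iff_add_one {n : ℕ} [NeZero n] (P : ZMod n → Prop)
    [DecidablePred P] {a b : ZMod n} (ha : P a) (hb : ¬P b) :
    2 ≤ #{y | ¬(P y ↔ P (y + 1))} := by
  obtain ⟨y₁, h₁, h₁'⟩ := ZMod.exists_and_not_add_one ha hb
  obtain ⟨y₂, h₂, h₂'⟩ := ZMod.exists_and_not_add_one (P := (¬P ·)) hb (not_not.mpr ha)
  exact one_lt_card.mpr ⟨y₁, by simp [h₁, h₁'], y₂, by simp [h₂, not_not.mp h₂'],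
    fun h => h₂ (h ▸ h₁)⟩

variable {K L : ℕ}

lemma card_boundarySlots [NeZero K] [NeZero L] (S : Finset (Vtx K L)) :
    #(boundarySlots S) = ∑ x, #{y | ¬((x, y) ∈ S ↔ (x, y + 1) ∈ S)} +
      ∑ y, #{x | ¬((x, y) ∈ S ↔ (x + 1, y) ∈ S)} := by
  simp only [boundarySlots, card_filter]
  rw [Fintype.sum_prod_type]
  simp only [Fintype.sum_bool, sum_add_distrib, edgeEnd, if_true, Bool.false_eq_true, if_false]
  rw [add_comm, Fintype.sum_prod_type, Fintype.sum_prod_type_right]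

lemma two_le_card_column_boundary [NeZero L] {S : Finset (Vtx K L)} (hL : #S < L) {v : Vtx K L}
    (hv : v ∈ S) : 2 ≤ #{y | ¬((v.1, y) ∈ S ↔ (v.1, y + 1) ∈ S)} := by
  obtain ⟨y, hy⟩ : ∃ y, (v.1, y) ∉ S := by
    by_contra! h
    have := card_le_card_of_injOn (s := univ) (v.1, ·) (fun y _ => h y)
      (fun _ _ _ _ h => (Prod.ext_iff.mp h).2)
    simp only [card_univ, ZMod.card] at this
    omega
  exact ZMod.two_le_card_filter_not_iff_add_one (fun y => (v.1, y) ∈ S) hv hy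

lemma two_le_card_row_boundary [NeZero K] {S : Finset (Vtx K L)} (hK : #S < K) {v : Vtx K L}
    (hv : v ∈ S) : 2 ≤ #{x | ¬((x, v.2) ∈ S ↔ (x + 1, v.2) ∈ S)} := by
  obtain ⟨x, hx⟩ : ∃ x, (x, v.2) ∉ S := by
    by_contra! h
    have := card_le_card_of_injOn (s := univ) (·, v.2) (fun x _ => h x)
      (fun _ _ _ _ h => (Prod.ext_iff.mp h).1)
    simp only [card_univ, ZMod.card] at this
    omega
  exact ZMod.two_le_card_filter_not_iff_add_one (fun x => (x, v.2) ∈ S) hv hx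

/-- With `s` the number of occupied columns plus occupied rows, `#S ≤ (s/2)²` by AM-GM while
every occupied column and row of a set smaller than both sides of the torus carries at least two
boundary edges. -/
lemma isoperimetric [NeZero K] [NeZero L] (S : Finset (Vtx K L)) (hK : #S < K) (hL : #S < L) :
    ∃ s : ℕ, 4 * #S ≤ s ^ 2 ∧ 2 * s ≤ #(boundarySlots S) := by
  set cols := S.image Prod.fst
  set rows := S.image Prod.snd
  refine ⟨#cols + #rows, ?_, ?_⟩
  · have hS : #S ≤ #cols * #rows := (card_product cols rows) ▸
      card_le_card fun v hv => mem_product.mpr ⟨mem_image_of_mem _ hv, mem_image_of_mem _ hv⟩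
    nlinarith [four_mul_le_sq_add #cols #rows]
  · have hcol : ∀ x ∈ cols, 2 ≤ #{y | ¬((x, y) ∈ S ↔ (x, y + 1) ∈ S)} := by
      simp only [cols, mem_image]
      rintro _ ⟨v, hv, rfl⟩
      exact two_le_card_column_boundary hL hv
    have hrow : ∀ y ∈ rows, 2 ≤ #{x | ¬((x, y) ∈ S ↔ (x + 1, y) ∈ S)} := by
      simp only [rows, mem_image]
      rintro _ ⟨v, hv, rfl⟩
      exact two_le_card_row_boundary hK hv
    rw [card_boundarySlots, mul_add, mul_comm 2, mul_comm 2, ← smul_eq_mul, ← smul_eq_mul,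
      ← sum_const, ← sum_const]
    exact add_le_add ((sum_le_sum hcol).trans (sum_le_sum_of_subset (subset_univ _)))
      ((sum_le_sum hrow).trans (sum_le_sum_of_subset (subset_univ _)))

end Isoperimetry

section CriticalLength

lemma fh_eq {h x : ℝ} (hh : 0 < h) (hx : 0 ≤ 2 * x + h) :
    fh h x = (2 * h + 4 * x) * ⌈(2 * x + h) / (2 * h)⌉₊ -
      2 * h * ((⌈(2 * x + h) / (2 * h)⌉₊ : ℝ) ^ 2 - ⌈(2 * x + h) / (2 * h)⌉₊ + 1) := by
  have harg : (x + h / 2) / h = (2 * x + h) / (2 * h) := by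
    field_simp
  rw [fh, harg, ← natCast_ceil_eq_intCast_ceil (by positivity)]
  ring

variable {K L : ℕ} {C : Couplings}

lemma Admissible.γ1_pos (hadm : Admissible K L C) : 0 < C.γ1 :=
  sub_pos.mpr hadm.h1122

lemma Admissible.γ23_pos (hadm : Admissible K L C) : 0 < C.γ23 :=
  add_pos hadm.pos23 hadm.pos22

lemma Admissible.γ1_lt_two_mul_γ12 (hadm : Admissible K L C) : C.γ1 < 2 * C.γ12 := by
  linarith [hadm.hC, hadm.γ23_pos]

lemma Admissible.two_le_lstar (hadm : Admissible K L C) : 2 ≤ lstar C := by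
  have hγ1 := hadm.γ1_pos
  refine Nat.lt_ceil.mpr ?_
  rw [Nat.cast_one, one_lt_div (by positivity)]
  linarith [hadm.γ1_lt_two_mul_γ12]

lemma Admissible.γ1_mul_lstar_lt (hadm : Admissible K L C) :
    C.γ1 * lstar C < C.γ12 + 3 / 2 * C.γ1 := by
  have hγ1 := hadm.γ1_pos
  have hceil := Nat.ceil_lt_add_one (a := (2 * C.γ12 + C.γ1) / (2 * C.γ1))
    (div_nonneg (by linarith [hadm.γ1_lt_two_mul_γ12]) (by positivity))
  calc C.γ1 * lstar C < C.γ1 * ((2 * C.γ12 + C.γ1) / (2 * C.γ1) + 1) :=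
        mul_lt_mul_of_pos_left hceil hγ1
    _ = C.γ12 + 3 / 2 * C.γ1 := by field_simp; ring

lemma Admissible.Γstar_eq (hadm : Admissible K L C) :
    Γstar C = (2 * C.γ1 + 4 * C.γ12) * lstar C -
      2 * C.γ1 * ((lstar C : ℝ) ^ 2 - lstar C + 1) :=
  fh_eq hadm.γ1_pos (by linarith [hadm.γ1_lt_two_mul_γ12, hadm.γ1_pos])

lemma Admissible.lstar_mul_pred_add_one_lt (hadm : Admissible K L C) :
    lstar C * (lstar C - 1) + 1 < K := by
  have h1 := Nat.mul_le_mul_left (lstar C) (Nat.sub_le (lstar C) 1)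
  have h4 := Nat.mul_le_mul hadm.two_le_lstar hadm.two_le_lstar
  have hK := hadm.hK
  rw [sq] at hK
  omega

end CriticalLength

lemma Nat.forall_le_of_forall_ne_succ {f : ℕ → ℕ} {m len : ℕ} (h0 : f 0 ≤ m)
    (hstep : ∀ n < len, f (n + 1) ≤ f n + 1) (hne : ∀ n ≤ len, f n ≠ m + 1) :
    ∀ n ≤ len, f n ≤ m := by
  intro n hn
  induction n with
  | zero => exact h0
  | succ n ih =>
    have := ih (by omega)
    have := hstep n (by omega)
    have := hne (n + 1) hn
    omega

section ProjectionEstimates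

open Finset

variable {K L : ℕ} [NeZero K] [NeZero L] {C : Couplings}

lemma nVtx_le_add_one_of_singleFlip {σ σ' : Config K L} (h : SingleFlip K L σ σ') (r : Spin) :
    nVtx K L σ' r ≤ nVtx K L σ r + 1 := by
  obtain ⟨v, -, hoff⟩ := h
  refine (card_le_card fun w hw => ?_).trans (card_insert_le v _)
  rw [mem_insert, mem_filter]
  rw [mem_filter] at hw
  by_cases hwv : w = v
  · exact Or.inl hwv
  · exact Or.inr ⟨mem_univ _, (hoff w hwv).trans hw.2⟩

lemma nVtx_const_of_ne {r s : Spin} (h : r ≠ s) : nVtx K L (const K L r) s = 0 := by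
  simp [nVtx, const, h]

lemma Admissible.H_const_one_add_Γstar_le (hadm : Admissible K L C) {σ : Config K L}
    (hV : nVtx K L σ 0 = lstar C * (lstar C - 1) + 1) :
    H K L C (const K L 1) + Γstar C ≤ H K L C σ := by
  have hK := hadm.lstar_mul_pred_add_one_lt
  obtain ⟨s, hsV, hsP⟩ := isoperimetric {v | σ v = 0} (by rw [← nVtx, hV]; exact hK)
    (by rw [← nVtx, hV]; exact hK.trans_le hadm.hKL)
  obtain ⟨m, hm⟩ : ∃ m, lstar C = m + 1 := ⟨lstar C - 1, by have := hadm.two_le_lstar; omega⟩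
  have hs : 4 * lstar C ≤ #(boundarySlots {v | σ v = 0}) := by
    rw [← nVtx, hV, hm, Nat.add_sub_cancel] at hsV
    -- `(2m + 1)² < 4((m + 1)m + 1)`
    have : 2 * (m + 1) ≤ s := by nlinarith
    omega
  have hPR : (4 * lstar C : ℝ) ≤ #(boundarySlots {v | σ v = 0}) := by exact_mod_cast hs
  have hVR : (nVtx K L σ 0 : ℝ) = (lstar C : ℝ) ^ 2 - lstar C + 1 := by
    rw [hV, hm]; push_cast; ring
  have hcoef : 0 ≤ C.γ1 / 2 + C.γ12 := by linarith [hadm.γ1_lt_two_mul_γ12, hadm.γ1_pos]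
  have hbound := H_const_one_sub_add_le hadm.h2233 hadm.h1213 hadm.γ23_pos.le σ
  rw [hVR] at hbound
  rw [hadm.Γstar_eq]
  linarith [mul_le_mul_of_nonneg_left hPR hcoef]

lemma Admissible.H_proj01_le (hadm : Admissible K L C) {σ : Config K L}
    (hV : nVtx K L σ 0 ≤ lstar C * (lstar C - 1)) :
    H K L C (proj K L 0 1 σ) ≤ H K L C σ := by
  have hK : nVtx K L σ 0 < K := hV.trans_lt (Nat.lt_of_succ_lt hadm.lstar_mul_pred_add_one_lt)
  obtain ⟨s, hsV, hsP⟩ := isoperimetric {v | σ v = 0} hK (hK.trans_le hadm.hKL)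
  have h2V : 2 * nVtx K L σ 0 ≤ lstar C * s := by
    have hVsq : nVtx K L σ 0 ≤ lstar C ^ 2 :=
      hV.trans (sq (lstar C) ▸ Nat.mul_le_mul_left _ (Nat.sub_le _ _))
    refine (Nat.pow_le_pow_iff_left two_ne_zero).mp ?_
    calc (2 * nVtx K L σ 0) ^ 2 = 4 * nVtx K L σ 0 * nVtx K L σ 0 := by ring
      _ ≤ s ^ 2 * lstar C ^ 2 := Nat.mul_le_mul hsV hVsq
      _ = (lstar C * s) ^ 2 := by ring
  have h2VR : (2 * nVtx K L σ 0 : ℝ) ≤ lstar C * s := by exact_mod_cast h2V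
  have hsPR : (2 * s : ℝ) ≤ #(boundarySlots {v | σ v = 0}) := by exact_mod_cast hsP
  have hγ1 := hadm.γ1_pos
  have hcoef : 0 ≤ C.γ1 / 2 + C.γ12 - C.γ23 := by linarith [hadm.hC, hadm.γ23_pos]
  have harea : 2 * C.γ1 * nVtx K L σ 0 ≤
      (C.γ1 / 2 + C.γ12 - C.γ23) * #(boundarySlots {v | σ v = 0}) :=
    calc 2 * C.γ1 * nVtx K L σ 0 = C.γ1 * (2 * nVtx K L σ 0) := by ring
      _ ≤ C.γ1 * (lstar C * s) := mul_le_mul_of_nonneg_left h2VR hγ1.le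
      _ = C.γ1 * lstar C * s := by ring
      _ ≤ (C.γ12 + 3 / 2 * C.γ1) * s :=
        mul_le_mul_of_nonneg_right hadm.γ1_mul_lstar_lt.le (Nat.cast_nonneg s)
      _ ≤ (C.γ1 / 2 + C.γ12 - C.γ23) * (2 * s) := by
        nlinarith [hadm.hC, hadm.γ23_pos, (Nat.cast_nonneg s : (0 : ℝ) ≤ s)]
      _ ≤ (C.γ1 / 2 + C.γ12 - C.γ23) * #(boundarySlots {v | σ v = 0}) :=
        mul_le_mul_of_nonneg_left hsPR hcoef
  linarith [H_sub_H_proj01_ge hadm.h1213 hadm.γ23_pos.le σ]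

lemma Admissible.H_proj01_lt_of_height_lt (hadm : Admissible K L C) {r : Spin} (hr : r ≠ 0)
    (ω : Path K L) (h0 : ω.toFun 0 = const K L r)
    (hω : ω.height C < H K L C (const K L 1) + Γstar C) :
    ∀ n ≤ ω.len, H K L C (proj K L 0 1 (ω.toFun n)) < H K L C (const K L 1) + Γstar C := by
  have hlt : ∀ n ≤ ω.len, H K L C (ω.toFun n) < H K L C (const K L 1) + Γstar C :=
    (ω.height_lt_iff C _).mp hω
  have hV : ∀ n ≤ ω.len, nVtx K L (ω.toFun n) 0 ≤ lstar C * (lstar C - 1) :=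
    Nat.forall_le_of_forall_ne_succ (by simp [h0, nVtx_const_of_ne hr])
      (fun n hn => nVtx_le_add_one_of_singleFlip (ω.step n hn) 0)
      (fun n hn hV => (hadm.H_const_one_add_Γstar_le hV).not_gt (hlt n hn))
  exact fun n hn => (hadm.H_proj01_le (hV n hn)).trans_lt (hlt n hn)

end ProjectionEstimates

theorem initial_cycles_stable_under_projection (K L : ℕ) [NeZero K] [NeZero L] (C : Couplings)
    (hadm : Admissible K L C) :
    proj K L 2 1 '' initCycle K L C 0 ⊆ initCycle K L C 0 ∧
    proj K L 2 1 '' initCycle K L C 1 ⊆ initCycle K L C 1 ∧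
    proj K L 0 1 '' initCycle K L C 1 ⊆ initCycle K L C 1 ∧
    proj K L 0 1 '' initCycle K L C 2 ⊆ initCycle K L C 2 := by
  have proj21 : ∀ r : Spin, r ≠ 2 → proj K L 2 1 '' initCycle K L C r ⊆ initCycle K L C r :=
    fun r hr => proj_image_subset_of_forall_path C hr 1 fun ω _ hω n hn =>
      (H_proj21_le hadm.h2233 hadm.h1213 hadm.γ23_pos.le _).trans_lt
        ((ω.le_height C hn).trans_lt hω)
  have proj01 : ∀ r : Spin, r ≠ 0 → proj K L 0 1 '' initCycle K L C r ⊆ initCycle K L C r :=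
    fun r hr => proj_image_subset_of_forall_path C hr 1 (hadm.H_proj01_lt_of_height_lt hr)
  exact ⟨proj21 0 (by decide), proj21 1 (by decide), proj01 1 (by decide), proj01 2 (by decide)⟩

end GenPotts
end

section
/- Fix h > 0 and let f_h(x) = 4(x+h/2)⌈(x+h/2)/h⌉ − 2h(⌈(x+h/2)/h⌉² − ⌈(x+h/2)/h⌉ + 1) for x > 0. Then: (a) for every integer m ≥ 0 and every x ∈ ((m−1/2)h, (m+1/2)h] one has f_h(x) = 4(m+1)x − 2hm², and f_h is continuous and strictly increasing on (0,∞); (b) f_h(h/2) = 2h and f_h(x) → ∞ as x → ∞; (c) for every x > 0, 0 ≤ f_h(x) − (2x²/h + 4x − h/2) ≤ h/2, where the left equality holds if and only if (x + h/2)/h is an integer and the right equality holds if and only if x/h is an integer. -/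
namespace GenPotts

/-!
With `t = (x + h/2)/h` one has `f_h(x) = 2h(2tc - c² + c - 1)` for `c = ⌈t⌉`, and for every
integer `k` the affine function `2h(2tk - k² + k - 1)` of slope `4k` lies below it, with equality
at `k = ⌈t⌉`. So `f_h` is an upper envelope of affine functions: it is convex, hence continuous,
and strictly increasing where the active slope `4⌈t⌉` is positive, i.e. for `x > 0`.
Moreover `f_h(x) - (2x²/h + 4x - h/2) = 2h·g(1 - g)` for the gap `g = ⌈t⌉ - t ∈ [0, 1)`, which
vanishes exactly when `g = 0` and reaches its maximum `h/2` exactly when `g = 1/2`.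
-/

section CeilGap

variable {K : Type*} [Field K] [LinearOrder K] [IsStrictOrderedRing K] [FloorRing K]

theorem _root_.Int.ceil_sub_self_eq_zero_iff (t : K) : (⌈t⌉ : K) - t = 0 ↔ ∃ n : ℤ, t = n := by
  rw [sub_eq_zero, Int.ceil_eq_self_iff_mem]
  exact ⟨fun ⟨n, hn⟩ => ⟨n, hn.symm⟩, fun ⟨n, hn⟩ => ⟨n, hn.symm⟩⟩

theorem _root_.Int.ceil_sub_self_eq_half_iff (t : K) :
    (⌈t⌉ : K) - t = 1 / 2 ↔ ∃ n : ℤ, t - 1 / 2 = n := by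
  constructor
  · intro ht
    exact ⟨⌈t⌉ - 1, by push_cast; linarith⟩
  · rintro ⟨n, hn⟩
    have hceil : ⌈t⌉ = n + 1 := by
      rw [Int.ceil_eq_iff]
      push_cast
      constructor <;> linarith
    rw [hceil]
    push_cast
    linarith

end CeilGap

section AuxiliaryFunction

open Set Filter

variable {h : ℝ}

noncomputable def fhPiece (h : ℝ) (k : ℤ) (x : ℝ) : ℝ :=
  4 * (x + h / 2) * k - 2 * h * (k ^ 2 - k + 1)

lemma fh_eq_fhPiece (h x : ℝ) : fh h x = fhPiece h ⌈(x + h / 2) / h⌉ x := rfl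

lemma fhPiece_strictMono {k : ℤ} (hk : 0 < k) : StrictMono (fhPiece h k) := by
  intro x y hxy
  have hk' : (0 : ℝ) < k := by exact_mod_cast hk
  unfold fhPiece
  nlinarith

lemma fhPiece_le_fh (hh : 0 < h) (k : ℤ) (x : ℝ) : fhPiece h k x ≤ fh h x := by
  rw [fh_eq_fhPiece]
  unfold fhPiece
  set t := (x + h / 2) / h
  have hxt : h * t = x + h / 2 := mul_div_cancel₀ _ hh.ne'
  have ht_le : t ≤ ⌈t⌉ := Int.le_ceil t
  have ht_gt : (⌈t⌉ : ℝ) - 1 < t := by linarith [Int.ceil_lt_add_one t]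
  -- both factors have the same sign because `k` is an integer and `⌈t⌉ - 1 < t ≤ ⌈t⌉`
  have key : 0 ≤ ((⌈t⌉ : ℝ) - k) * (2 * t - ⌈t⌉ - k + 1) := by
    rcases lt_trichotomy k ⌈t⌉ with hk | hk | hk
    · have : (k : ℝ) + 1 ≤ ⌈t⌉ := by exact_mod_cast hk
      nlinarith
    · simp [hk]
    · have : (⌈t⌉ : ℝ) + 1 ≤ k := by exact_mod_cast hk
      nlinarith
  rw [← hxt]
  nlinarith [mul_nonneg hh.le key]

theorem fh_eq_of_mem_Ioc (hh : 0 < h) (m : ℤ) {x : ℝ}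
    (hx : x ∈ Ioc ((m - 1 / 2) * h) ((m + 1 / 2) * h)) :
    fh h x = 4 * (m + 1) * x - 2 * h * m ^ 2 := by
  have hceil : ⌈(x + h / 2) / h⌉ = m + 1 := by
    rw [Int.ceil_eq_iff, lt_div_iff₀ hh, div_le_iff₀ hh]
    push_cast
    constructor <;> linarith [hx.1, hx.2]
  rw [fh_eq_fhPiece, hceil, fhPiece]
  push_cast
  ring

theorem fh_half (hh : 0 < h) : fh h (h / 2) = 2 * h := by
  rw [fh_eq_of_mem_Ioc hh 0 ⟨by push_cast; linarith, by push_cast; linarith⟩]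
  push_cast
  ring

theorem fh_strictMonoOn (hh : 0 < h) : StrictMonoOn (fh h) (Ioi 0) := by
  intro x hx y _ hxy
  have hceil : 0 < ⌈(x + h / 2) / h⌉ := Int.ceil_pos.2 (by have := mem_Ioi.1 hx; positivity)
  calc fh h x = fhPiece h ⌈(x + h / 2) / h⌉ x := fh_eq_fhPiece h x
    _ < fhPiece h ⌈(x + h / 2) / h⌉ y := fhPiece_strictMono hceil hxy
    _ ≤ fh h y := fhPiece_le_fh hh _ y

theorem fh_convexOn (hh : 0 < h) : ConvexOn ℝ univ (fh h) := by
  refine ⟨convex_univ, fun x _ y _ a b ha hb hab => ?_⟩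
  set k := ⌈(a • x + b • y + h / 2) / h⌉
  have hpiece : fhPiece h k (a • x + b • y) = a • fhPiece h k x + b • fhPiece h k y := by
    simp only [fhPiece, smul_eq_mul]
    linear_combination (2 * h * (k ^ 2 - k + 1) - 2 * h * k) * hab
  calc fh h (a • x + b • y) = a • fhPiece h k x + b • fhPiece h k y := hpiece
    _ ≤ a • fh h x + b • fh h y := by
      simp only [smul_eq_mul]
      gcongr <;> exact fhPiece_le_fh hh k _

theorem fh_continuous (hh : 0 < h) : Continuous (fh h) :=
  continuousOn_univ.1 ((fh_convexOn hh).continuousOn isOpen_univ)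

theorem tendsto_fh_atTop (hh : 0 < h) : Tendsto (fh h) atTop atTop := by
  refine tendsto_atTop_mono (fun x => ?_) (tendsto_id.const_mul_atTop (by norm_num : (0 : ℝ) < 4))
  have := fhPiece_le_fh hh 1 x
  norm_num [fhPiece] at this
  rw [id]
  linarith

lemma fh_sub_parabola (hh : h ≠ 0) (x : ℝ) :
    fh h x - (2 * x ^ 2 / h + 4 * x - h / 2) =
      2 * h * ((⌈(x + h / 2) / h⌉ - (x + h / 2) / h) *
        (1 - (⌈(x + h / 2) / h⌉ - (x + h / 2) / h))) := by
  unfold fh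
  field_simp
  ring

lemma fh_sub_parabola_nonneg (hh : 0 < h) (x : ℝ) :
    0 ≤ fh h x - (2 * x ^ 2 / h + 4 * x - h / 2) := by
  rw [fh_sub_parabola hh.ne']
  have hgap_nonneg := Int.le_ceil ((x + h / 2) / h)
  have hgap_lt_one := Int.ceil_lt_add_one ((x + h / 2) / h)
  exact mul_nonneg (by positivity) (mul_nonneg (by linarith) (by linarith))

lemma fh_sub_parabola_le (hh : 0 < h) (x : ℝ) :
    fh h x - (2 * x ^ 2 / h + 4 * x - h / 2) ≤ h / 2 := by
  rw [fh_sub_parabola hh.ne']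
  nlinarith [mul_nonneg hh.le (sq_nonneg (⌈(x + h / 2) / h⌉ - (x + h / 2) / h - 1 / 2))]

lemma fh_sub_parabola_eq_zero_iff (hh : 0 < h) (x : ℝ) :
    fh h x - (2 * x ^ 2 / h + 4 * x - h / 2) = 0 ↔ ∃ n : ℤ, (x + h / 2) / h = n := by
  rw [fh_sub_parabola hh.ne', ← Int.ceil_sub_self_eq_zero_iff]
  have : 1 - (⌈(x + h / 2) / h⌉ - (x + h / 2) / h) ≠ 0 := by
    linarith [Int.ceil_lt_add_one ((x + h / 2) / h)]
  simp [hh.ne', this]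

lemma fh_sub_parabola_eq_half_iff (hh : 0 < h) (x : ℝ) :
    fh h x - (2 * x ^ 2 / h + 4 * x - h / 2) = h / 2 ↔ ∃ n : ℤ, x / h = n := by
  have hxh : x / h = (x + h / 2) / h - 1 / 2 := by field_simp; ring
  rw [fh_sub_parabola hh.ne', hxh, ← Int.ceil_sub_self_eq_half_iff]
  set g : ℝ := ⌈(x + h / 2) / h⌉ - (x + h / 2) / h
  constructor
  · intro hg
    have : 2 * h * (g - 1 / 2) ^ 2 = 0 := by linear_combination -hg
    simpa [hh.ne', sub_eq_zero] using this
  · intro hg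
    rw [hg]
    ring

end AuxiliaryFunction

theorem auxiliary_function_properties (h : ℝ) (hh : 0 < h) :
    (∀ (m : ℕ) (x : ℝ), ((m : ℝ) - 1 / 2) * h < x → x ≤ ((m : ℝ) + 1 / 2) * h →
      fh h x = 4 * ((m : ℝ) + 1) * x - 2 * h * (m : ℝ) ^ 2) ∧
    ContinuousOn (fh h) (Set.Ioi 0) ∧
    StrictMonoOn (fh h) (Set.Ioi 0) ∧
    fh h (h / 2) = 2 * h ∧
    Filter.Tendsto (fh h) Filter.atTop Filter.atTop ∧
    (∀ x : ℝ, 0 < x →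
      0 ≤ fh h x - (2 * x ^ 2 / h + 4 * x - h / 2) ∧
      fh h x - (2 * x ^ 2 / h + 4 * x - h / 2) ≤ h / 2 ∧
      (fh h x - (2 * x ^ 2 / h + 4 * x - h / 2) = 0 ↔
        ∃ n : ℤ, (x + h / 2) / h = (n : ℝ)) ∧
      (fh h x - (2 * x ^ 2 / h + 4 * x - h / 2) = h / 2 ↔
        ∃ n : ℤ, x / h = (n : ℝ))) := by
  refine ⟨fun m x hlo hhi => ?_, (fh_continuous hh).continuousOn, fh_strictMonoOn hh, fh_half hh,
    tendsto_fh_atTop hh, fun x _ => ⟨fh_sub_parabola_nonneg hh x, fh_sub_parabola_le hh x,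
      fh_sub_parabola_eq_zero_iff hh x, fh_sub_parabola_eq_half_iff hh x⟩⟩
  simpa using fh_eq_of_mem_Ioc hh m ⟨by simpa using hlo, by simpa using hhi⟩

end GenPotts
end
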